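/- arXiv:1803.11430 — 3 statements merged into one kernel-verified Lean document; each statement's English description precedes it below -/
import Mathlib

section
/- Let δ > 0, C ≥ 0 and 0 < ε < 2δ. There exists d₀ ≥ 1 such that for every real d ≥ d₀ the following holds: if (σ_m)_{m≥0} is a sequence with values in [0,1] such that σ₀ = 1, σ₁ ≥ ε, and such that for all m ≥ 2 one has σ_m ≥ σ̃_{m−1} + (δ/d)·σ̃_{m−1} − (1/2)·σ̃_{m−1}² − C/d³, where σ̃_k := min(σ_k, σ_{k−1}, ε/d), then σ_m ≥ ε/d for all m ≥ 1; in particular liminf_{m→∞} σ_m ≥ ε/d > 0. -/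
/-- Supercritical sequence argument: if `σ₀ = 1`, `σ₁ ≥ ε` and the recursion lower bound
`σ_m ≥ σ̃_{m-1} + (δ/d)σ̃_{m-1} - σ̃_{m-1}²/2 - C/d³` holds with
`σ̃_k = min(σ_k, σ_{k-1}, ε/d)`, then `σ_m ≥ ε/d` for all `m ≥ 1`. -/
theorem stmt1 (δ C ε : ℝ) (hδ : 0 < δ) (hC : 0 ≤ C) (hε : 0 < ε) (hεδ : ε < 2 * δ) :
    ∃ d₀ : ℝ, 1 ≤ d₀ ∧ ∀ d : ℝ, d₀ ≤ d →
      ∀ σ : ℕ → ℝ, (∀ m, σ m ∈ Set.Icc (0 : ℝ) 1) → σ 0 = 1 → ε ≤ σ 1 →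
        (∀ m, 2 ≤ m →
          min (min (σ (m - 1)) (σ (m - 2))) (ε / d)
            + (δ / d) * min (min (σ (m - 1)) (σ (m - 2))) (ε / d)
            - (1 / 2) * (min (min (σ (m - 1)) (σ (m - 2))) (ε / d)) ^ 2
            - C / d ^ 3 ≤ σ m) →
        ∀ m, 1 ≤ m → ε / d ≤ σ m := by
  have hgap : 0 < ε * δ - ε ^ 2 / 2 := by nlinarith
  refine ⟨max (max 1 ε) (C / (ε * δ - ε ^ 2 / 2)), le_trans (le_max_left 1 ε) (le_max_left _ _),
    fun d hd σ hIcc h0 h1 hrec => ?_⟩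
  have hd1 : (1 : ℝ) ≤ d := le_trans (le_trans (le_max_left 1 ε) (le_max_left _ _)) hd
  have hdpos : 0 < d := lt_of_lt_of_le one_pos hd1
  have hdε : ε ≤ d := le_trans (le_trans (le_max_right 1 ε) (le_max_left _ _)) hd
  have hdC : C / (ε * δ - ε ^ 2 / 2) ≤ d := le_trans (le_max_right _ _) hd
  have hCd : C ≤ d * (ε * δ - ε ^ 2 / 2) := by
    rw [div_le_iff₀ hgap] at hdC; linarith
  have key : ∀ m, ε / d ≤ σ m := by
    intro m
    induction m using Nat.strong_induction_on with
    | _ m ih =>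
      match m with
      | 0 => rw [h0]; exact div_le_one_of_le₀ hdε hdpos.le
      | 1 => exact le_trans (div_le_self hε.le hd1) h1
      | (n + 2) =>
        have hrec' := hrec (n + 2) (by omega)
        have h1' : ε / d ≤ σ (n + 2 - 1) := ih (n + 1) (by omega)
        have h2' : ε / d ≤ σ (n + 2 - 2) := ih n (by omega)
        have hmin : min (min (σ (n + 2 - 1)) (σ (n + 2 - 2))) (ε / d) = ε / d :=
          min_eq_right (le_min h1' h2')
        rw [hmin] at hrec'
        have hεd : 0 < ε / d := div_pos hε hdpos
        have : ε / d + (ε * δ - ε ^ 2 / 2) / d ^ 2 - C / d ^ 3 ≤ σ (n + 2) := by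
          refine le_trans (le_of_eq ?_) hrec'
          field_simp
          ring
        refine le_trans ?_ this
        have : C / d ^ 3 ≤ (ε * δ - ε ^ 2 / 2) / d ^ 2 := by
          rw [div_le_div_iff₀ (by positivity) (by positivity)]
          nlinarith [sq_nonneg d]
        linarith
  exact fun m _ => key m
end

section
/- For all α₀ > 0 and ε > 0 there exist C > 0 and d₀ ≥ 1 such that for every integer d ≥ d₀, every real α with |α| ≤ α₀, every x ∈ [0,1] and every σ ∈ [0, ε/d], setting t = 1/d + α/d² and s = xσd, one has | (e^{−t}(1 + t − σxt))^d − [ 1 − (1/2 + s)/d + ( 1/3 − α + s − αs + (1/2 + s)²/2 )/d² ] | ≤ C/d³. -/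
open Real

/-- Key algebraic identity for the cubic Taylor polynomial of `log(1+h)`. -/
lemma stmt2_key_ident (α s u : ℝ) :
    (u + (α - s) * u ^ 2 - α * s * u ^ 3)
      - (u + (α - s) * u ^ 2 - α * s * u ^ 3) ^ 2 / 2
      + (u + (α - s) * u ^ 2 - α * s * u ^ 3) ^ 3 / 3
    = u * (1 + α * u + (-(1 / 2 + s) * u + (1 / 3 - α + s - α * s) * u ^ 2)
        + ((α - s + α * s) * u ^ 3 - α * s * u ^ 4
          - ((α - s) * u - α * s * u ^ 2) ^ 2 * u / 2
          + u ^ 2 * ((α - s) * u - α * s * u ^ 2) ^ 2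
              * (3 + ((α - s) * u - α * s * u ^ 2)) / 3)) := by
  ring

set_option maxHeartbeats 1000000 in
/-- The asymptotic expansion (2.13): for `t = 1/d + α/d²`, `s = xσd`,
`(e^{-t}(1+t-σxt))^d = 1 - (1/2+s)/d + (1/3-α+s-αs+(1/2+s)²/2)/d² + O(d^{-3})`,
uniformly over `|α| ≤ α₀`, `x ∈ [0,1]`, `σ ∈ [0, ε/d]`. -/
theorem stmt2 (α₀ ε : ℝ) (hα₀ : 0 < α₀) (hε : 0 < ε) :
    ∃ C > (0 : ℝ), ∃ d₀ : ℕ, 1 ≤ d₀ ∧ ∀ d : ℕ, d₀ ≤ d →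
      ∀ α : ℝ, |α| ≤ α₀ → ∀ x ∈ Set.Icc (0 : ℝ) 1, ∀ σ ∈ Set.Icc (0 : ℝ) (ε / d),
        let t : ℝ := 1 / d + α / (d : ℝ) ^ 2
        let s : ℝ := x * σ * d
        |(Real.exp (-t) * (1 + t - σ * x * t)) ^ d
          - (1 - (1 / 2 + s) / d
              + (1 / 3 - α + s - α * s + (1 / 2 + s) ^ 2 / 2) / (d : ℝ) ^ 2)|
          ≤ C / (d : ℝ) ^ 3 := by
  obtain ⟨K, hKdef⟩ : ∃ y : ℝ, y = 1 + α₀ + ε + α₀ * ε := ⟨_, rfl⟩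
  have hK1 : 1 ≤ K := by rw [hKdef]; nlinarith
  have hK0 : 0 < K := by linarith
  obtain ⟨C₁, hC₁def⟩ : ∃ y : ℝ, y = 2 * K + 2 * K ^ 2 + K ^ 3 := ⟨_, rfl⟩
  obtain ⟨C₂, hC₂def⟩ : ∃ y : ℝ, y = C₁ + 2 * K ^ 4 := ⟨_, rfl⟩
  have hC₁0 : 0 < C₁ := by rw [hC₁def]; positivity
  have hC₂0 : 0 < C₂ := by rw [hC₂def]; nlinarith [pow_pos hK0 4]
  obtain ⟨C, hCdef⟩ : ∃ y : ℝ, y = 6 * C₂ + 8 * K ^ 3 + 2 * K ^ 2 + 1 := ⟨_, rfl⟩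
  have hC0 : 0 < C := by rw [hCdef]; nlinarith [pow_pos hK0 3, pow_pos hK0 2]
  refine ⟨C, hC0, ⌈2 * K + C₂⌉₊ + 1, Nat.le_add_left 1 _, ?_⟩
  intro d hdge α hα x hx σ hσ
  intro t s
  -- basic facts about d
  have hdR : 2 * K + C₂ ≤ (d : ℝ) := by
    calc 2 * K + C₂ ≤ (⌈2 * K + C₂⌉₊ : ℝ) := Nat.le_ceil _
    _ ≤ ((⌈2 * K + C₂⌉₊ + 1 : ℕ) : ℝ) := by push_cast; linarith
    _ ≤ (d : ℝ) := by exact_mod_cast Nat.cast_le.mpr hdge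
  have hd1 : (1 : ℝ) ≤ (d : ℝ) := by linarith
  have hd0 : (0 : ℝ) < (d : ℝ) := by linarith
  have hdne : (d : ℝ) ≠ 0 := ne_of_gt hd0
  obtain ⟨u, hu_def⟩ : ∃ y : ℝ, y = 1 / (d : ℝ) := ⟨_, rfl⟩
  have hu0 : 0 < u := by rw [hu_def]; positivity
  have hu1 : u ≤ 1 := by rw [hu_def, div_le_one hd0]; exact hd1
  have hdu : (d : ℝ) * u = 1 := by rw [hu_def]; field_simp
  -- ranges of α, s
  obtain ⟨hαl, hαr⟩ := abs_le.mp hα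
  obtain ⟨hx0, hx1⟩ := hx
  obtain ⟨hσ0, hσ1⟩ := hσ
  have hts : t = 1 / (d : ℝ) + α / (d : ℝ) ^ 2 := rfl
  have hss : s = x * σ * d := rfl
  have hs0 : 0 ≤ s := by rw [hss]; positivity
  have hsε : s ≤ ε := by
    rw [hss]
    calc x * σ * d ≤ 1 * (ε / d) * d := by
          apply mul_le_mul _ le_rfl hd0.le (by positivity)
          exact mul_le_mul hx1 hσ1 hσ0 zero_le_one
    _ = ε := by field_simp
  -- elementary abs bounds
  have b1 : |α - s| ≤ α₀ + ε := abs_le.mpr ⟨by linarith, by linarith⟩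
  have b2 : |α * s| ≤ α₀ * ε := by
    have m1 : α * s ≤ α₀ * s := mul_le_mul_of_nonneg_right hαr hs0
    have m2 : α₀ * s ≤ α₀ * ε := mul_le_mul_of_nonneg_left hsε hα₀.le
    have m3 : -α * s ≤ α₀ * s := mul_le_mul_of_nonneg_right (by linarith) hs0
    rw [abs_le]
    constructor <;> linarith
  obtain ⟨b2l, b2r⟩ := abs_le.mp b2
  have b3 : |1 / 2 + s| ≤ K := abs_le.mpr ⟨by rw [hKdef]; linarith, by rw [hKdef]; linarith⟩
  have b4 : |1 / 3 - α + s - α * s| ≤ K :=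
    abs_le.mpr ⟨by rw [hKdef]; linarith, by rw [hKdef]; linarith⟩
  have b5 : |α - s + α * s| ≤ K :=
    abs_le.mpr ⟨by rw [hKdef]; linarith, by rw [hKdef]; linarith⟩
  -- helper: |a * u^n| ≤ A * u
  have keybnd : ∀ (a A : ℝ) (n : ℕ), |a| ≤ A → n ≠ 0 → |a * u ^ n| ≤ A * u := by
    intro a A n ha hn
    rw [abs_mul, abs_pow, abs_of_pos hu0]
    exact mul_le_mul ha (pow_le_of_le_one hu0.le hu1 hn) (pow_nonneg hu0.le n)
      ((abs_nonneg a).trans ha)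
  -- h and g
  obtain ⟨h, hhdef⟩ : ∃ y : ℝ, y = u + (α - s) * u ^ 2 - α * s * u ^ 3 := ⟨_, rfl⟩
  obtain ⟨g, hgdef⟩ : ∃ y : ℝ, y = (α - s) * u - α * s * u ^ 2 := ⟨_, rfl⟩
  have habs_h : |h| ≤ K * u := by
    have t1 := keybnd (α - s) (α₀ + ε) 2 b1 (by norm_num)
    have t2 := keybnd (α * s) (α₀ * ε) 3 b2 (by norm_num)
    have tri : |h| ≤ |u| + |(α - s) * u ^ 2| + |α * s * u ^ 3| := by
      have e : h = (u + (α - s) * u ^ 2) + -(α * s * u ^ 3) := by rw [hhdef]; ring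
      rw [e]
      refine (abs_add_le _ _).trans ?_
      rw [abs_neg]
      have := abs_add_le u ((α - s) * u ^ 2)
      linarith
    rw [abs_of_pos hu0] at tri
    calc |h| ≤ u + (α₀ + ε) * u + (α₀ * ε) * u := by linarith
    _ = K * u := by rw [hKdef]; ring
  have habs_g : |g| ≤ K * u := by
    have t1 := keybnd (α - s) (α₀ + ε) 1 b1 (by norm_num)
    have t2 := keybnd (α * s) (α₀ * ε) 2 b2 (by norm_num)
    rw [pow_one] at t1
    have tri : |g| ≤ |(α - s) * u| + |α * s * u ^ 2| := by
      have e : g = ((α - s) * u) + -(α * s * u ^ 2) := by rw [hgdef]; ring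
      rw [e]
      refine (abs_add_le _ _).trans ?_
      rw [abs_neg]
    calc |g| ≤ (α₀ + ε) * u + (α₀ * ε) * u := by linarith
    _ ≤ K * u := by rw [hKdef]; linarith
  have hKu : K * u ≤ 1 / 2 := by
    rw [hu_def, mul_one_div, div_le_iff₀ hd0]
    linarith
  have habs_h2 : |h| ≤ 1 / 2 := habs_h.trans hKu
  obtain ⟨hhl, hhr⟩ := abs_le.mp habs_h2
  have hpos : 0 < 1 + h := by linarith
  have habs_gK : |g| ≤ K := habs_g.trans (by
    have := mul_le_mul_of_nonneg_left hu1 hK0.le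
    linarith)
  obtain ⟨hgl, hgr⟩ := abs_le.mp habs_gK
  -- log remainder bound
  have hlog : |Real.log (1 + h) - (h - h ^ 2 / 2 + h ^ 3 / 3)| ≤ 2 * K ^ 4 * u ^ 4 := by
    have hlt : |(-h)| < 1 := by rw [abs_neg]; linarith [abs_le.mp habs_h2]
    have h0 := Real.abs_log_sub_add_sum_range_le hlt 3
    rw [show (1 : ℝ) - (-h) = 1 + h by ring, abs_neg] at h0
    have hsum : (∑ i ∈ Finset.range 3, (-h) ^ (i + 1) / ((i : ℕ) + 1 : ℝ))
        + Real.log (1 + h)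
        = Real.log (1 + h) - (h - h ^ 2 / 2 + h ^ 3 / 3) := by
      rw [Finset.sum_range_succ, Finset.sum_range_succ, Finset.sum_range_succ,
        Finset.sum_range_zero]
      norm_num
      ring
    rw [hsum, show (3 : ℕ) + 1 = 4 from rfl] at h0
    refine h0.trans ?_
    have r1 : |h| ^ 4 ≤ (K * u) ^ 4 := pow_le_pow_left₀ (abs_nonneg h) habs_h 4
    rw [mul_pow] at r1
    have r2 : (1 : ℝ) / 2 ≤ 1 - |h| := by linarith
    have hp : (0 : ℝ) ≤ 2 * K ^ 4 * u ^ 4 := by positivity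
    rw [div_le_iff₀ (by linarith : (0 : ℝ) < 1 - |h|)]
    have q := mul_le_mul_of_nonneg_left r2 hp
    linarith
  obtain ⟨Lg, hLgdef⟩ : ∃ y : ℝ, y = Real.log (1 + h) := ⟨_, rfl⟩
  rw [← hLgdef] at hlog
  obtain ⟨w₁, hw1def⟩ : ∃ y : ℝ,
    y = -(1 / 2 + s) * u + (1 / 3 - α + s - α * s) * u ^ 2 := ⟨_, rfl⟩
  obtain ⟨E, hEdef⟩ : ∃ y : ℝ, y = (α - s + α * s) * u ^ 3 - α * s * u ^ 4
      - g ^ 2 * u / 2 + u ^ 2 * g ^ 2 * (3 + g) / 3 := ⟨_, rfl⟩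
  obtain ⟨w, hwdef⟩ : ∃ y : ℝ, y = (d : ℝ) * Lg - 1 - α * u := ⟨_, rfl⟩
  -- the exact algebraic identity
  have hE : (d : ℝ) * (h - h ^ 2 / 2 + h ^ 3 / 3) = 1 + α * u + w₁ + E := by
    have hid := stmt2_key_ident α s u
    rw [← hhdef, ← hgdef, ← hw1def, ← hEdef] at hid
    calc (d : ℝ) * (h - h ^ 2 / 2 + h ^ 3 / 3)
        = (d : ℝ) * (u * (1 + α * u + w₁ + E)) := by rw [hid]
    _ = ((d : ℝ) * u) * (1 + α * u + w₁ + E) := by ring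
    _ = 1 + α * u + w₁ + E := by rw [hdu]; ring
  -- bound on E
  have hu43 : u ^ 4 ≤ u ^ 3 := pow_le_pow_of_le_one hu0.le hu1 (by norm_num)
  have hE1 : |E| ≤ C₁ * u ^ 3 := by
    have e1 : |(α - s + α * s) * u ^ 3| ≤ K * u ^ 3 := by
      rw [abs_mul, abs_pow, abs_of_pos hu0]
      exact mul_le_mul_of_nonneg_right b5 (by positivity)
    have e2 : |α * s * u ^ 4| ≤ K * u ^ 3 := by
      rw [abs_mul, abs_pow, abs_of_pos hu0]
      have hb : |α * s| ≤ K := b2.trans (by rw [hKdef]; linarith)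
      exact mul_le_mul hb hu43 (by positivity) (by linarith)
    have hg2 : g ^ 2 ≤ K ^ 2 * u ^ 2 := by
      have m := mul_le_mul habs_g habs_g (abs_nonneg g) (by positivity : (0:ℝ) ≤ K * u)
      have e : |g| * |g| = g ^ 2 := by rw [abs_mul_abs_self]; ring
      rw [← e]
      calc |g| * |g| ≤ (K * u) * (K * u) := m
      _ = K ^ 2 * u ^ 2 := by ring
    have e3 : |g ^ 2 * u / 2| ≤ K ^ 2 * u ^ 3 / 2 := by
      rw [abs_of_nonneg (by positivity : (0:ℝ) ≤ g ^ 2 * u / 2)]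
      have m := mul_le_mul_of_nonneg_right hg2 hu0.le
      linarith
    have p1 : u ^ 2 * g ^ 2 ≤ K ^ 2 * u ^ 3 := by
      have m1 := mul_le_mul_of_nonneg_left hg2 (sq_nonneg u)
      have m2 : K ^ 2 * u ^ 4 ≤ K ^ 2 * u ^ 3 :=
        mul_le_mul_of_nonneg_left hu43 (by positivity)
      linarith
    have e4 : |u ^ 2 * g ^ 2 * (3 + g) / 3| ≤ (K ^ 2 + K ^ 3) * u ^ 3 := by
      have h3 : |3 + g| ≤ 3 + K := abs_le.mpr ⟨by linarith, by linarith⟩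
      have heq : |u ^ 2 * g ^ 2 * (3 + g) / 3| = u ^ 2 * g ^ 2 * |3 + g| / 3 := by
        rw [abs_div, abs_mul, abs_mul,
          abs_of_nonneg (by positivity : (0:ℝ) ≤ u ^ 2),
          abs_of_nonneg (sq_nonneg g)]
        norm_num
      rw [heq]
      have m1 := mul_le_mul_of_nonneg_left h3 (by positivity : (0:ℝ) ≤ u ^ 2 * g ^ 2)
      have m2 := mul_le_mul_of_nonneg_right p1 (by linarith : (0:ℝ) ≤ 3 + K)
      have m3 : (0:ℝ) ≤ K ^ 3 * u ^ 3 :=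
        mul_nonneg (pow_nonneg hK0.le 3) (pow_nonneg hu0.le 3)
      linarith
    have tri : |E| ≤ |(α - s + α * s) * u ^ 3| + |α * s * u ^ 4| + |g ^ 2 * u / 2|
        + |u ^ 2 * g ^ 2 * (3 + g) / 3| := by
      have e0 : E = ((((α - s + α * s) * u ^ 3) + -(α * s * u ^ 4)) + -(g ^ 2 * u / 2))
          + (u ^ 2 * g ^ 2 * (3 + g) / 3) := by rw [hEdef]; ring
      rw [e0]
      refine (abs_add_le _ _).trans ?_
      have t2 := abs_add_le (((α - s + α * s) * u ^ 3) + -(α * s * u ^ 4)) (-(g ^ 2 * u / 2))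
      have t3 := abs_add_le ((α - s + α * s) * u ^ 3) (-(α * s * u ^ 4))
      rw [abs_neg] at t2 t3
      linarith
    have hsum : |E| ≤ K * u ^ 3 + K * u ^ 3 + K ^ 2 * u ^ 3 / 2 + (K ^ 2 + K ^ 3) * u ^ 3 := by
      linarith
    refine hsum.trans ?_
    rw [hC₁def]
    have m : (0:ℝ) ≤ K ^ 2 * u ^ 3 :=
      mul_nonneg (pow_nonneg hK0.le 2) (pow_nonneg hu0.le 3)
    linarith
  -- w is close to w₁
  have hwdiff : |w - w₁| ≤ C₂ * u ^ 3 := by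
    have hrepr : w - w₁ = (d : ℝ) * (Lg - (h - h ^ 2 / 2 + h ^ 3 / 3)) + E := by
      rw [hwdef]; linear_combination hE
    rw [hrepr]
    have t1 : |(d : ℝ) * (Lg - (h - h ^ 2 / 2 + h ^ 3 / 3))| ≤ 2 * K ^ 4 * u ^ 3 := by
      rw [abs_mul, abs_of_pos hd0]
      calc (d : ℝ) * |Lg - (h - h ^ 2 / 2 + h ^ 3 / 3)|
          ≤ (d : ℝ) * (2 * K ^ 4 * u ^ 4) := mul_le_mul_of_nonneg_left hlog hd0.le
      _ = ((d : ℝ) * u) * (2 * K ^ 4 * u ^ 3) := by ring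
      _ = 2 * K ^ 4 * u ^ 3 := by rw [hdu]; ring
    calc |(d : ℝ) * (Lg - (h - h ^ 2 / 2 + h ^ 3 / 3)) + E|
        ≤ |(d : ℝ) * (Lg - (h - h ^ 2 / 2 + h ^ 3 / 3))| + |E| := abs_add_le _ _
    _ ≤ 2 * K ^ 4 * u ^ 3 + C₁ * u ^ 3 := by linarith
    _ = C₂ * u ^ 3 := by rw [hC₂def]; ring
  -- bounds on w₁
  have hw1b : |w₁| ≤ 2 * K * u := by
    have t1 : |(-(1 / 2 + s)) * u ^ 1| ≤ K * u :=
      keybnd (-(1 / 2 + s)) K 1 (by rw [abs_neg]; exact b3) one_ne_zero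
    have t2 : |(1 / 3 - α + s - α * s) * u ^ 2| ≤ K * u :=
      keybnd (1 / 3 - α + s - α * s) K 2 b4 (by norm_num)
    rw [pow_one] at t1
    have tri := abs_add_le (-(1 / 2 + s) * u) ((1 / 3 - α + s - α * s) * u ^ 2)
    rw [hw1def]
    calc |(-(1 / 2 + s)) * u + (1 / 3 - α + s - α * s) * u ^ 2|
        ≤ K * u + K * u := by linarith
    _ = 2 * K * u := by ring
  have hw1_1 : |w₁| ≤ 1 := by linarith
  have hu31 : u ^ 3 ≤ u := pow_le_of_le_one hu0.le hu1 (by norm_num)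
  have hwd1 : |w - w₁| ≤ 1 := by
    have h1 : C₂ * u ^ 3 ≤ C₂ * u := mul_le_mul_of_nonneg_left hu31 hC₂0.le
    have h2 : C₂ * u ≤ 1 := by
      rw [hu_def, mul_one_div, div_le_one hd0]; linarith
    linarith
  -- exponential comparisons
  have expw : |Real.exp w - Real.exp w₁| ≤ 6 * C₂ * u ^ 3 := by
    have hsplit : Real.exp w = Real.exp w₁ * Real.exp (w - w₁) := by
      rw [← Real.exp_add]; congr 1; ring
    have e0 : Real.exp w - Real.exp w₁ = Real.exp w₁ * (Real.exp (w - w₁) - 1) := by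
      rw [hsplit]; ring
    rw [e0, abs_mul, abs_of_pos (Real.exp_pos w₁)]
    have hb : |Real.exp (w - w₁) - 1| ≤ 2 * |w - w₁| := Real.abs_exp_sub_one_le hwd1
    have he3 : Real.exp w₁ ≤ 3 := by
      calc Real.exp w₁ ≤ Real.exp 1 := Real.exp_le_exp.mpr (by linarith [(abs_le.mp hw1_1).2])
      _ ≤ 3 := by linarith [Real.exp_one_lt_d9]
    calc Real.exp w₁ * |Real.exp (w - w₁) - 1|
        ≤ 3 * (2 * (C₂ * u ^ 3)) := by
          apply mul_le_mul he3 (hb.trans (by linarith)) (abs_nonneg _) (by norm_num)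
    _ = 6 * C₂ * u ^ 3 := by ring
  have expw1 : |Real.exp w₁ - (1 + w₁ + w₁ ^ 2 / 2)| ≤ 8 * K ^ 3 * u ^ 3 := by
    have h0 := Real.exp_bound hw1_1 (n := 3) (by norm_num)
    have hsum : (∑ m ∈ Finset.range 3, w₁ ^ m / (m.factorial : ℝ)) = 1 + w₁ + w₁ ^ 2 / 2 := by
      rw [Finset.sum_range_succ, Finset.sum_range_succ, Finset.sum_range_succ,
        Finset.sum_range_zero]
      norm_num [Nat.factorial]
    rw [hsum] at h0
    refine h0.trans ?_
    have h3 : |w₁| ^ 3 ≤ 8 * K ^ 3 * u ^ 3 := by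
      calc |w₁| ^ 3 ≤ (2 * K * u) ^ 3 := pow_le_pow_left₀ (abs_nonneg w₁) hw1b 3
      _ = 8 * K ^ 3 * u ^ 3 := by ring
    have h4 : (0:ℝ) ≤ |w₁| ^ 3 := by positivity
    norm_num [Nat.factorial]
    linarith
  -- the polynomial comparison
  obtain ⟨P, hPdef⟩ : ∃ y : ℝ, y = 1 - (1 / 2 + s) * u
      + (1 / 3 - α + s - α * s + (1 / 2 + s) ^ 2 / 2) * u ^ 2 := ⟨_, rfl⟩
  have hpoly : |(1 + w₁ + w₁ ^ 2 / 2) - P| ≤ 2 * K ^ 2 * u ^ 3 := by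
    have hc : (1 + w₁ + w₁ ^ 2 / 2) - P
        = u ^ 3 * (-((1 / 2 + s) * (1 / 3 - α + s - α * s))
            + (1 / 3 - α + s - α * s) ^ 2 * u / 2) := by
      rw [hw1def, hPdef]; ring
    rw [hc, abs_mul, abs_pow, abs_of_pos hu0]
    have a1 : |(1 / 2 + s) * (1 / 3 - α + s - α * s)| ≤ K ^ 2 := by
      rw [abs_mul]
      calc |1 / 2 + s| * |1 / 3 - α + s - α * s| ≤ K * K :=
        mul_le_mul b3 b4 (abs_nonneg _) (by linarith)
      _ = K ^ 2 := by ring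
    have a2 : |(1 / 3 - α + s - α * s) ^ 2 * u / 2| ≤ K ^ 2 / 2 := by
      have heq : |(1 / 3 - α + s - α * s) ^ 2 * u / 2|
          = |1 / 3 - α + s - α * s| ^ 2 * u / 2 := by
        rw [abs_div, abs_mul, abs_pow, abs_of_pos hu0]
        norm_num
      rw [heq]
      have q2 : |1 / 3 - α + s - α * s| ^ 2 ≤ K ^ 2 :=
        pow_le_pow_left₀ (abs_nonneg _) b4 2
      have m : |1 / 3 - α + s - α * s| ^ 2 * u ≤ K ^ 2 * 1 :=
        mul_le_mul q2 hu1 hu0.le (by positivity)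
      linarith
    have q1 : |(-((1 / 2 + s) * (1 / 3 - α + s - α * s))
        + (1 / 3 - α + s - α * s) ^ 2 * u / 2)| ≤ 2 * K ^ 2 := by
      refine (abs_add_le _ _).trans ?_
      rw [abs_neg]
      linarith [sq_nonneg K]
    calc u ^ 3 * |(-((1 / 2 + s) * (1 / 3 - α + s - α * s))
          + (1 / 3 - α + s - α * s) ^ 2 * u / 2)|
        ≤ u ^ 3 * (2 * K ^ 2) := mul_le_mul_of_nonneg_left q1 (by positivity)
    _ = 2 * K ^ 2 * u ^ 3 := by ring
  -- rewrite the left-hand side as exp w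
  have ht' : t = u + α * u ^ 2 := by rw [hts, hu_def]; ring
  have hσx : σ * x = s * u := by
    rw [hss, hu_def]; field_simp
  have hfac : 1 + t - σ * x * t = 1 + h := by
    rw [hσx, ht', hhdef]; ring
  have hdt : (d : ℝ) * t = 1 + α * u := by
    rw [ht']; linear_combination (1 + α * u) * hdu
  have hexpL : Real.exp Lg = 1 + h := by rw [hLgdef]; exact Real.exp_log hpos
  have hLHS : (Real.exp (-t) * (1 + t - σ * x * t)) ^ d = Real.exp w := by
    rw [hfac, ← hexpL, mul_pow, ← Real.exp_nat_mul, ← Real.exp_nat_mul, ← Real.exp_add]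
    congr 1
    rw [hwdef]
    linear_combination -hdt
  -- final assembly
  have main : |Real.exp w - P| ≤ C * u ^ 3 := by
    have e : Real.exp w - P = (Real.exp w - Real.exp w₁)
        + (Real.exp w₁ - (1 + w₁ + w₁ ^ 2 / 2)) + ((1 + w₁ + w₁ ^ 2 / 2) - P) := by ring
    have tri : |Real.exp w - P| ≤ |Real.exp w - Real.exp w₁|
        + |Real.exp w₁ - (1 + w₁ + w₁ ^ 2 / 2)| + |(1 + w₁ + w₁ ^ 2 / 2) - P| := by
      rw [e]
      refine (abs_add_le _ _).trans ?_
      have := abs_add_le (Real.exp w - Real.exp w₁) (Real.exp w₁ - (1 + w₁ + w₁ ^ 2 / 2))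
      linarith
    have hb : |Real.exp w - P| ≤ 6 * C₂ * u ^ 3 + 8 * K ^ 3 * u ^ 3 + 2 * K ^ 2 * u ^ 3 := by
      linarith
    refine hb.trans ?_
    rw [hCdef]
    have m : (0:ℝ) ≤ u ^ 3 := pow_nonneg hu0.le 3
    linarith
  have hP2 : 1 - (1 / 2 + s) / (d : ℝ)
      + (1 / 3 - α + s - α * s + (1 / 2 + s) ^ 2 / 2) / (d : ℝ) ^ 2 = P := by
    rw [hPdef, hu_def]; ring
  calc |(Real.exp (-t) * (1 + t - σ * x * t)) ^ d
        - (1 - (1 / 2 + s) / (d : ℝ)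
            + (1 / 3 - α + s - α * s + (1 / 2 + s) ^ 2 / 2) / (d : ℝ) ^ 2)|
      = |Real.exp w - P| := by rw [hLHS, hP2]
  _ ≤ C * u ^ 3 := main
  _ = C / (d : ℝ) ^ 3 := by rw [hu_def]; ring
end

section
/- For every b₀ > 0 there exists c > 0 such that for every integer d ≥ 1 and every real β with 0 < β ≤ b₀/d, setting p_i = e^{−β}β^i/i! for i ≥ 0, one has 0 ≤ 1 − (p₀ + p₁)^d − d·p₂·(p₀ + p₁)^{2d−1} ≤ c/d². -/
open Real

lemma aux1_stmt11 (q : ℝ) (h0 : 0 ≤ q) (h1 : q ≤ 1) (m : ℕ) :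
    ((m : ℝ) + 1) * (1 - q) * q ^ m ≤ 1 - q ^ (m + 1) := by
  induction m with
  | zero => simp
  | succ n ih =>
    have ha : (0:ℝ) ≤ q ^ n := pow_nonneg h0 n
    have hb : q ^ n ≤ 1 := pow_le_one₀ h0 h1
    have key := mul_le_mul_of_nonneg_left ih h0
    have hc : q ^ n * q ≤ 1 := by nlinarith
    simp only [pow_succ] at *
    push_cast
    nlinarith [mul_nonneg (sub_nonneg.2 h1) (sub_nonneg.2 hc)]

lemma aux2_stmt11 (q : ℝ) (h0 : 0 ≤ q) (h1 : q ≤ 1) (n : ℕ) :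
    1 - q ^ n ≤ (n : ℝ) * (1 - q) := by
  have h := one_add_mul_le_pow (a := q - 1) (by linarith) n
  have : 1 + (n:ℝ) * (q - 1) ≤ q ^ n := by simpa using h
  linarith


lemma aux3_stmt11 (β : ℝ) (hβ : 0 < β) (hβ1 : β ≤ 1) :
    1 - Real.exp (-β) * (1 + β) - Real.exp (-β) * β ^ 2 / 2 ≤ β ^ 3 := by
  have hee : Real.exp (-β) * Real.exp β = 1 := by rw [← Real.exp_add]; simp
  have he1 : Real.exp (-β) ≤ 1 := by
    nlinarith [Real.add_one_le_exp β, Real.exp_pos β]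
  have he0 : (0:ℝ) < Real.exp (-β) := Real.exp_pos _
  have hdiff : Real.exp β - (1 + β + β ^ 2 / 2) ≤ β ^ 3 := by
    have hb' := Real.exp_bound' hβ.le hβ1 (n := 3) (by norm_num)
    norm_num [Finset.sum_range_succ, Nat.factorial] at hb'
    nlinarith [pow_nonneg hβ.le 3]
  have hdiff0 : 0 ≤ Real.exp β - (1 + β + β ^ 2 / 2) := by
    linarith [Real.quadratic_le_exp_of_nonneg hβ.le]
  have key : 1 - Real.exp (-β) * (1 + β) - Real.exp (-β) * β ^ 2 / 2
      = Real.exp (-β) * (Real.exp β - (1 + β + β ^ 2 / 2)) := by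
    linear_combination (-1 : ℝ) * hee
  rw [key]; nlinarith


lemma aux4_stmt11 (q P2 β : ℝ) (m : ℕ)
    (hq0 : 0 ≤ q) (hq1 : q ≤ 1) (hP2pos : 0 ≤ P2) (hP2b : P2 ≤ β ^ 2)
    (h1q : 1 - q ≤ β ^ 2) (hF : 1 - q - P2 ≤ β ^ 3) (hr0 : 0 ≤ 1 - q - P2)
    (hβ : 0 ≤ β) :
    1 - q ^ (m + 1) - ((m : ℝ) + 1) * P2 * q ^ (2 * m + 1)
      ≤ 2 * ((m : ℝ) + 1) ^ 2 * β ^ 4 + ((m : ℝ) + 1) * β ^ 3 := by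
  set D : ℝ := (m : ℝ) + 1 with hDdef
  have hmD : (m : ℝ) ≤ D := by rw [hDdef]; linarith
  have hD0 : (0:ℝ) < D := by positivity
  have h1q0 : 0 ≤ 1 - q := by linarith
  have hqmpos : (0:ℝ) ≤ q ^ m := pow_nonneg hq0 m
  have hqm1 : q ^ m ≤ 1 := pow_le_one₀ hq0 hq1
  have hqm11 : q ^ (m + 1) ≤ 1 := pow_le_one₀ hq0 hq1
  have haux2m : 1 - q ^ m ≤ (m : ℝ) * (1 - q) := aux2_stmt11 q hq0 hq1 m
  have haux2m1 : 1 - q ^ (m + 1) ≤ D * (1 - q) := by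
    have := aux2_stmt11 q hq0 hq1 (m + 1)
    push_cast at this; rw [hDdef]; linarith
  have hid : 1 - q ^ (m + 1) - D * P2 * q ^ (2 * m + 1)
      = (1 - q ^ (m + 1) - D * (1 - q) * q ^ m)
        + D * q ^ m * (1 - q - P2) + D * q ^ m * P2 * (1 - q ^ (m + 1)) := by
    rw [show 2 * m + 1 = m + (m + 1) from by omega, pow_add]; ring
  have hsq : (1 - q) ^ 2 ≤ (β ^ 2) ^ 2 := pow_le_pow_left₀ h1q0 h1q 2
  have hB1 : 1 - q ^ (m + 1) - D * (1 - q) * q ^ m ≤ D ^ 2 * β ^ 4 := by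
    calc 1 - q ^ (m + 1) - D * (1 - q) * q ^ m
        ≤ D * (1 - q) - D * (1 - q) * q ^ m := by linarith
      _ = (D * (1 - q)) * (1 - q ^ m) := by ring
      _ ≤ (D * (1 - q)) * ((m : ℝ) * (1 - q)) :=
          mul_le_mul_of_nonneg_left haux2m (mul_nonneg hD0.le h1q0)
      _ ≤ (D * (1 - q)) * (D * (1 - q)) :=
          mul_le_mul_of_nonneg_left (mul_le_mul_of_nonneg_right hmD h1q0)
            (mul_nonneg hD0.le h1q0)
      _ = D ^ 2 * (1 - q) ^ 2 := by ring
      _ ≤ D ^ 2 * (β ^ 2) ^ 2 := mul_le_mul_of_nonneg_left hsq (by positivity)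
      _ = D ^ 2 * β ^ 4 := by ring
  have hB2 : D * q ^ m * (1 - q - P2) ≤ D * β ^ 3 := by
    have h1 : q ^ m * (1 - q - P2) ≤ β ^ 3 := by
      have := mul_le_mul_of_nonneg_right hqm1 hr0
      rw [one_mul] at this; linarith
    calc D * q ^ m * (1 - q - P2) = D * (q ^ m * (1 - q - P2)) := by ring
      _ ≤ D * β ^ 3 := mul_le_mul_of_nonneg_left h1 hD0.le
  have hB3 : D * q ^ m * P2 * (1 - q ^ (m + 1)) ≤ D ^ 2 * β ^ 4 := by
    have h1 : 1 - q ^ (m + 1) ≤ D * β ^ 2 := by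
      have := mul_le_mul_of_nonneg_left h1q hD0.le
      linarith
    have h2 : q ^ m * P2 ≤ β ^ 2 := by
      have := mul_le_mul_of_nonneg_right hqm1 hP2pos
      rw [one_mul] at this; linarith
    have h3 : q ^ m * P2 * (1 - q ^ (m + 1)) ≤ β ^ 2 * (D * β ^ 2) :=
      mul_le_mul h2 h1 (by linarith) (by positivity)
    calc D * q ^ m * P2 * (1 - q ^ (m + 1))
        = D * (q ^ m * P2 * (1 - q ^ (m + 1))) := by ring
      _ ≤ D * (β ^ 2 * (D * β ^ 2)) := mul_le_mul_of_nonneg_left h3 hD0.le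
      _ = D ^ 2 * β ^ 4 := by ring
  rw [hid]; linarith

lemma aux5_stmt11 (D β b₀ : ℝ) (hD1 : 1 ≤ D) (hβ : 0 < β) (hDβ : β * D ≤ b₀) :
    2 * D ^ 2 * β ^ 4 + D * β ^ 3 ≤ (2 * b₀ ^ 4 + b₀ ^ 3 + b₀ ^ 2 + 1) / D ^ 2 := by
  have hD0 : (0:ℝ) < D := by linarith
  have hb : 0 < b₀ := lt_of_lt_of_le (by positivity) hDβ
  rw [le_div_iff₀ (by positivity)]
  have h4 : (β * D) ^ 4 ≤ b₀ ^ 4 := pow_le_pow_left₀ (by positivity) hDβ 4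
  have h3 : (β * D) ^ 3 ≤ b₀ ^ 3 := pow_le_pow_left₀ (by positivity) hDβ 3
  nlinarith [sq_nonneg b₀]

/-- Estimate (2.15): with Poisson(β) probabilities `p_i = e^{-β}β^i/i!` and `β ≤ b₀/d`,
`0 ≤ 1 - (p₀+p₁)^d - d·p₂·(p₀+p₁)^{2d-1} ≤ c/d²`. -/
theorem stmt11 (b₀ : ℝ) (hb₀ : 0 < b₀) :
    ∃ c > (0 : ℝ), ∀ d : ℕ, 1 ≤ d → ∀ β : ℝ, 0 < β → β ≤ b₀ / d →
      let p : ℕ → ℝ := fun i => Real.exp (-β) * β ^ i / (Nat.factorial i)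
      0 ≤ 1 - (p 0 + p 1) ^ d - d * p 2 * (p 0 + p 1) ^ (2 * d - 1) ∧
      1 - (p 0 + p 1) ^ d - d * p 2 * (p 0 + p 1) ^ (2 * d - 1) ≤ c / (d : ℝ) ^ 2 := by
  refine ⟨2 * b₀ ^ 4 + b₀ ^ 3 + b₀ ^ 2 + 1, by positivity, ?_⟩
  intro d hd β hβ hβd p
  obtain ⟨m, rfl⟩ : ∃ m, d = m + 1 := ⟨d - 1, (Nat.succ_pred_eq_of_pos hd).symm⟩
  have h2d : 2 * (m + 1) - 1 = 2 * m + 1 := by omega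
  have hq01 : p 0 + p 1 = Real.exp (-β) * (1 + β) := by
    simp [p, Nat.factorial]; ring
  have hp2 : p 2 = Real.exp (-β) * β ^ 2 / 2 := by
    simp [p, Nat.factorial]
  rw [h2d, hq01, hp2]
  clear hq01 hp2 hd p
  push_cast at hβd ⊢
  set q : ℝ := Real.exp (-β) * (1 + β) with hqdef
  set P2 : ℝ := Real.exp (-β) * β ^ 2 / 2 with hP2def
  set D : ℝ := (m : ℝ) + 1 with hDdef
  set c : ℝ := 2 * b₀ ^ 4 + b₀ ^ 3 + b₀ ^ 2 + 1 with hcdef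
  -- basic facts
  have hD1 : (1:ℝ) ≤ D := by
    have : (0:ℝ) ≤ (m:ℝ) := Nat.cast_nonneg m
    rw [hDdef]; linarith
  have hD0 : (0:ℝ) < D := by linarith
  have hDβ : β * D ≤ b₀ := (le_div_iff₀ hD0).1 hβd
  have he0 : (0:ℝ) < Real.exp (-β) := Real.exp_pos _
  have hee : Real.exp (-β) * Real.exp β = 1 := by rw [← Real.exp_add]; simp
  have hq0 : 0 < q := by rw [hqdef]; positivity
  have hP2pos : 0 < P2 := by rw [hP2def]; positivity
  have hq1 : q ≤ 1 := by
    have h := Real.add_one_le_exp β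
    have h2 : Real.exp (-β) * (1 + β) ≤ Real.exp (-β) * Real.exp β :=
      mul_le_mul_of_nonneg_left (by linarith) he0.le
    rw [hqdef]; linarith [hee ▸ h2]
  have hqP : q + P2 ≤ 1 := by
    have h := Real.quadratic_le_exp_of_nonneg hβ.le
    have h2 : Real.exp (-β) * (1 + β + β ^ 2 / 2) ≤ Real.exp (-β) * Real.exp β :=
      mul_le_mul_of_nonneg_left h he0.le
    rw [hqdef, hP2def]; nlinarith
  have h1q0 : 0 ≤ 1 - q := by linarith
  have h1q : 1 - q ≤ β ^ 2 := by
    have h := Real.add_one_le_exp (-β)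
    rw [hqdef]; nlinarith
  have he1 : Real.exp (-β) ≤ 1 := by
    nlinarith [Real.add_one_le_exp β, Real.exp_pos β]
  have hP2b : P2 ≤ β ^ 2 := by rw [hP2def]; nlinarith
  have hqmpos : (0:ℝ) ≤ q ^ m := pow_nonneg hq0.le m
  have hqm1 : q ^ m ≤ 1 := pow_le_one₀ hq0.le hq1
  have hqm1pos : (0:ℝ) ≤ q ^ (m + 1) := pow_nonneg hq0.le _
  have hqm11 : q ^ (m + 1) ≤ 1 := pow_le_one₀ hq0.le hq1
  have hA : D * (1 - q) * q ^ m ≤ 1 - q ^ (m + 1) := by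
    rw [hDdef]; exact aux1_stmt11 q hq0.le hq1 m
  have haux2m : 1 - q ^ m ≤ (m : ℝ) * (1 - q) := aux2_stmt11 q hq0.le hq1 m
  have haux2m1 : 1 - q ^ (m + 1) ≤ D * (1 - q) := by
    have := aux2_stmt11 q hq0.le hq1 (m + 1)
    push_cast at this; rw [hDdef]; linarith
  constructor
  · -- lower bound
    have hB : q ^ (2 * m + 1) ≤ q ^ m :=
      pow_le_pow_of_le_one hq0.le hq1 (by omega)
    have hchain : D * P2 * q ^ (2 * m + 1) ≤ D * (1 - q) * q ^ m := by
      calc D * P2 * q ^ (2 * m + 1) ≤ D * P2 * q ^ m :=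
            mul_le_mul_of_nonneg_left hB (by positivity)
        _ ≤ D * (1 - q) * q ^ m :=
            mul_le_mul_of_nonneg_right
              (mul_le_mul_of_nonneg_left (by linarith) hD0.le) hqmpos
    linarith
  · -- upper bound
    rcases le_or_gt β 1 with hβ1 | hβ1
    · -- small β
      have hF : 1 - q - P2 ≤ β ^ 3 := by
        rw [hqdef, hP2def]; exact aux3_stmt11 β hβ hβ1
      have hr0 : 0 ≤ 1 - q - P2 := by linarith
      have hE := aux4_stmt11 q P2 β m hq0.le hq1 hP2pos.le hP2b h1q hF hr0 hβ.le
      have hfin := aux5_stmt11 D β b₀ hD1 hβ hDβ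
      rw [hcdef, hDdef]
      rw [hDdef] at hfin
      linarith
    · -- large β : then D ≤ b₀
      have hDb : D < b₀ := by
        have h := mul_lt_mul_of_pos_left hβ1 hD0
        rw [mul_one] at h
        rw [mul_comm] at hDβ
        linarith
      have hpos : 0 ≤ D * P2 * q ^ (2 * m + 1) := by positivity
      have hE1 : 1 - q ^ (m + 1) - D * P2 * q ^ (2 * m + 1) ≤ 1 := by
        linarith [pow_nonneg hq0.le (m + 1)]
      rw [le_div_iff₀ (by positivity), hcdef]
      calc (1 - q ^ (m + 1) - D * P2 * q ^ (2 * m + 1)) * D ^ 2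
          ≤ 1 * D ^ 2 := mul_le_mul_of_nonneg_right hE1 (by positivity)
        _ = D ^ 2 := one_mul _
        _ ≤ b₀ ^ 2 := pow_le_pow_left₀ hD0.le hDb.le 2
        _ ≤ 2 * b₀ ^ 4 + b₀ ^ 3 + b₀ ^ 2 + 1 := by linarith [pow_pos hb₀ 4, pow_pos hb₀ 3]
end
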